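/- For n ≥ 1, (-1)^n Bl_n(x|λ)/n! = ∑_{m=1}^{n} C(n-1, m-1) B̂l_m(-x|λ)/m!, where C denotes binomial coefficients, Bl_n are Boole polynomials and B̂l_m are Boole polynomials of the second kind. -/

import Mathlib

open Finset PowerSeries

/-- Stirling numbers of the second kind. -/
def stirling2 : ℕ → ℕ → ℕ
  | 0, 0 => 1
  | 0, _ + 1 => 0
  | _ + 1, 0 => 0
  | n + 1, k + 1 => (k + 1) * stirling2 n (k + 1) + stirling2 n k

/-- Unsigned Stirling numbers of the first kind. -/
def stirling1 : ℕ → ℕ → ℕ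
  | 0, 0 => 1
  | 0, _ + 1 => 0
  | _ + 1, 0 => 0
  | n + 1, k + 1 => n * stirling1 n (k + 1) + stirling1 n k

/-- Signed Stirling numbers of the first kind. -/
def s1 (n l : ℕ) : ℚ := (-1) ^ (n - l) * (stirling1 n l : ℚ)

/-- The exponential generating function `∑ a n * t^n / n!` as a power series over `ℚ`. -/
noncomputable def egf (a : ℕ → ℚ) : PowerSeries ℚ :=
  PowerSeries.mk fun n => a n / (Nat.factorial n : ℚ)

/-- The binomial series `(1+t)^x = ∑ (x)_n t^n / n!` for `x : ℚ`. -/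
noncomputable def onePlusTPow (x : ℚ) : PowerSeries ℚ :=
  egf fun n => ∏ i ∈ Finset.range n, (x - i)

/-- `e^{xt}` as a power series over `ℚ`. -/
noncomputable def expXT (x : ℚ) : PowerSeries ℚ := egf fun n => x ^ n

/-
The substitution `t ↦ t/(1-t)` sends `1 + t` to `(1 - t)⁻¹`, hence `(1 + t)^r` to `(1 - t)^(-r)`
for every exponent `r` (coefficientwise this is Chu–Vandermonde). It therefore turns
`(1 + t)^(λ-x) / (1 + (1 + t)^λ)`, the generating function of `B̂l_m(-x|λ)`, into
`(1 - t)^x / (1 + (1 - t)^λ)`, the generating function of `Bl_n(x|λ)` at `-t`. Comparing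
coefficients gives the identity, since the coefficient of `t^n` in `(t/(1-t))^m` is `C(n-1, m-1)`.
-/

section Substitution

variable {R : Type*} [CommRing R]

variable (R) in
noncomputable def xOverOneSubX : R⟦X⟧ := X * (invOneSubPow R 1 : R⟦X⟧)

theorem hasSubst_xOverOneSubX : HasSubst (xOverOneSubX R) :=
  HasSubst.of_constantCoeff_zero' (by simp [xOverOneSubX])

theorem one_add_xOverOneSubX_mul_one_sub_X : (1 + xOverOneSubX R) * (1 - X) = 1 := by
  have h := (invOneSubPow R 1).val_inv
  rw [invOneSubPow_inv_eq_one_sub_pow, pow_one] at h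
  rw [xOverOneSubX]
  linear_combination X * h

theorem xOverOneSubX_pow (m : ℕ) :
    xOverOneSubX R ^ m = X ^ m * (invOneSubPow R m : R⟦X⟧) := by
  rw [xOverOneSubX, mul_pow, ← Units.val_pow_eq_pow_val, invOneSubPow_eq_inv_one_sub_pow,
    invOneSubPow_eq_inv_one_sub_pow, pow_one]

theorem coeff_zero_xOverOneSubX_pow_succ (m : ℕ) : coeff 0 (xOverOneSubX R ^ (m + 1)) = 0 := by
  rw [xOverOneSubX_pow, coeff_X_pow_mul', if_neg (by omega)]

theorem coeff_succ_xOverOneSubX_pow_succ (n m : ℕ) :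
    coeff (n + 1) (xOverOneSubX R ^ (m + 1)) = n.choose m := by
  rw [xOverOneSubX_pow, coeff_X_pow_mul', invOneSubPow_val_succ_eq_mk_add_choose]
  split_ifs with h
  · rw [coeff_mk, Nat.add_sub_add_right, Nat.add_sub_cancel' (by omega)]
  · rw [Nat.choose_eq_zero_of_lt (by omega), Nat.cast_zero]

theorem coeff_zero_subst_xOverOneSubX (f : R⟦X⟧) :
    coeff 0 (f.subst (xOverOneSubX R)) = coeff 0 f := by
  rw [coeff_subst' hasSubst_xOverOneSubX, finsum_eq_single _ 0]
  · simp
  · intro d hd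
    obtain ⟨m, rfl⟩ := Nat.exists_eq_succ_of_ne_zero hd
    rw [coeff_zero_xOverOneSubX_pow_succ, smul_zero]

theorem coeff_succ_subst_xOverOneSubX (f : R⟦X⟧) (n : ℕ) :
    coeff (n + 1) (f.subst (xOverOneSubX R)) =
      ∑ m ∈ range (n + 1), n.choose m * coeff (m + 1) f := by
  rw [coeff_subst' hasSubst_xOverOneSubX, finsum_eq_sum_of_support_subset _ (s := range (n + 2))]
  · rw [sum_range_succ']
    simp [coeff_succ_xOverOneSubX_pow_succ, mul_comm]
  · intro d hd
    contrapose! hd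
    rw [mem_coe, mem_range, not_lt] at hd
    obtain ⟨m, rfl⟩ : ∃ m, d = m + 1 := ⟨d - 1, by omega⟩
    rw [Function.mem_support, not_not, coeff_succ_xOverOneSubX_pow_succ,
      Nat.choose_eq_zero_of_lt (by omega), Nat.cast_zero, smul_zero]

end Substitution

section Binomial

variable {R : Type*} [CommRing R] [BinomialRing R]

theorem subst_xOverOneSubX_binomialSeries (r : R) :
    (binomialSeries R r).subst (xOverOneSubX R) = rescale (-1) (binomialSeries R (-r)) := by
  ext (_ | n)
  · simp [coeff_zero_subst_xOverOneSubX]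
  simp only [coeff_succ_subst_xOverOneSubX, coeff_rescale, binomialSeries_coeff, smul_eq_mul,
    mul_one]
  -- `(-1)ⁿ (-r choose n) = (r + n - 1 choose n)`, then Chu–Vandermonde
  rw [Ring.choose_neg, Units.smul_def, Int.coe_negOnePow_natCast, zsmul_eq_mul, Int.cast_pow,
    Int.cast_neg, Int.cast_one, ← mul_assoc, ← mul_pow, neg_one_mul, neg_neg, one_pow, one_mul,
    show r + ((n + 1 : ℕ) : R) - 1 = r + n by push_cast; ring,
    Ring.add_choose_eq _ (Commute.all _ _), Nat.sum_antidiagonal_eq_sum_range_succ_mk,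
    sum_range_succ' _ (n + 1)]
  simp only [Ring.choose_natCast, Nat.sub_zero, Nat.choose_succ_self, Nat.cast_zero, mul_zero,
    add_zero, Nat.add_sub_add_right]
  refine sum_congr rfl fun m hm => ?_
  rw [Nat.choose_symm (by simpa [Nat.lt_succ_iff] using hm), mul_comm]

theorem subst_xOverOneSubX_mul_eq_of_mul_eq_binomialSeries {F : R⟦X⟧} {L : ℕ} {y : R}
    (hF : F * (1 + (1 + X) ^ L) = binomialSeries R (L + y)) :
    F.subst (xOverOneSubX R) * (1 + (1 - X) ^ L) = rescale (-1) (binomialSeries R (-y)) := by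
  have h := congrArg (substAlgHom (hasSubst_xOverOneSubX (R := R))) hF
  rw [map_mul, map_add, map_one, map_pow, map_add, map_one, substAlgHom_X, coe_substAlgHom,
    subst_xOverOneSubX_binomialSeries] at h
  calc F.subst (xOverOneSubX R) * (1 + (1 - X) ^ L)
      = F.subst (xOverOneSubX R) * (1 + (1 + xOverOneSubX R) ^ L) * (1 - X) ^ L := by
        rw [mul_assoc, add_mul, one_mul, ← mul_pow, one_add_xOverOneSubX_mul_one_sub_X, one_pow,
          add_comm]
    _ = rescale (-1) (binomialSeries R (-(L + y)) * (1 + X) ^ L) := by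
        rw [h, map_mul, map_pow, map_add, map_one, rescale_neg_one_X, sub_eq_add_neg]
    _ = rescale (-1) (binomialSeries R (-y)) := by
        rw [← binomialSeries_nat (R := R), ← binomialSeries_add, neg_add_rev, neg_add_cancel_right]

end Binomial

theorem coeff_egf (a : ℕ → ℚ) (n : ℕ) : coeff n (egf a) = a n / n.factorial :=
  coeff_mk _ _

theorem onePlusTPow_eq_binomialSeries (y : ℚ) :
    onePlusTPow y = PowerSeries.binomialSeries ℚ y := by
  ext n
  rw [onePlusTPow, coeff_egf, binomialSeries_coeff, smul_eq_mul, mul_one, Ring.choose_eq_smul,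
    ← Polynomial.aeval_eq_smeval, Polynomial.aeval_def, ← Polynomial.eval_map, descPochhammer_map,
    descPochhammer_eval_eq_prod_range, smul_eq_mul, div_eq_inv_mul]

theorem boole_boole2nd_reflection_general (L : ℕ) (x : ℚ) (Bl Bh : ℚ → ℕ → ℚ)
    (hBl : ∀ y : ℚ, egf (Bl y) * (1 + (1 + PowerSeries.X) ^ L) = onePlusTPow y)
    (hBh : ∀ y : ℚ, egf (Bh y) * (1 + (1 + PowerSeries.X) ^ L) = onePlusTPow ((L : ℚ) + y))
    (n : ℕ) (hn : 1 ≤ n) :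
    (-1) ^ n * Bl x n / (Nat.factorial n : ℚ) =
      ∑ m ∈ Finset.Icc 1 n,
        ((n - 1).choose (m - 1) : ℚ) * Bh (-x) m / (Nat.factorial m : ℚ) := by
  have hD : (1 + (1 - X) ^ L : ℚ⟦X⟧) ≠ 0 := fun h => by
    simpa using congrArg constantCoeff h
  have hBl' : rescale (-1) (egf (Bl x)) * (1 + (1 - X) ^ L) = rescale (-1) (onePlusTPow x) := by
    simpa [sub_eq_add_neg] using congrArg (rescale (-1 : ℚ)) (hBl x)
  have hBh' : (egf (Bh (-x))).subst (xOverOneSubX ℚ) * (1 + (1 - X) ^ L) =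
      rescale (-1) (onePlusTPow x) := by
    simpa [onePlusTPow_eq_binomialSeries] using
      subst_xOverOneSubX_mul_eq_of_mul_eq_binomialSeries (y := -x)
        (by rw [hBh, onePlusTPow_eq_binomialSeries])
  have hreflect := congrArg (coeff n) (mul_right_cancel₀ hD (hBl'.trans hBh'.symm))
  obtain ⟨k, rfl⟩ := Nat.exists_eq_add_of_le' hn
  rw [coeff_rescale, coeff_egf, coeff_succ_subst_xOverOneSubX] at hreflect
  rw [mul_div_assoc, hreflect, ← Ico_add_one_right_eq_Icc, sum_Ico_eq_sum_range,
    Nat.add_sub_cancel]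
  refine sum_congr rfl fun m _ => ?_
  rw [coeff_egf, add_comm 1 m, Nat.add_sub_cancel, Nat.add_sub_cancel, mul_div_assoc]

theorem boole_boole2nd_reflection (L : ℕ) (hL : 0 < L) (x : ℚ) (Bl Bh : ℚ → ℕ → ℚ)
    (hBl : ∀ y : ℚ, egf (Bl y) * (1 + (1 + PowerSeries.X) ^ L) = onePlusTPow y)
    (hBh : ∀ y : ℚ, egf (Bh y) * (1 + (1 + PowerSeries.X) ^ L) = onePlusTPow ((L : ℚ) + y))
    (n : ℕ) (hn : 1 ≤ n) :
    (-1) ^ n * Bl x n / (Nat.factorial n : ℚ) =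
      ∑ m ∈ Finset.Icc 1 n,
        ((n - 1).choose (m - 1) : ℚ) * Bh (-x) m / (Nat.factorial m : ℚ) :=
  boole_boole2nd_reflection_general L x Bl Bh hBl hBh n hn
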